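/- arXiv:1512.08904 — 3 statements merged into one kernel-verified Lean document; each statement's English description precedes it below -/
import Mathlib

section
/- Let p be a prime, C ⊂ ℚ_p a finite set, and ξ ∈ ℚ_p nonzero such that ∑_{c∈C} χ(ξ c) = 0, where χ is the standard additive character of ℚ_p. Then for every c ∈ C there exists c' ∈ C with c' ≠ c and |c - c'|_p = p/|ξ|_p. -/
/-!
Fix `c ∈ C` and take `N = M + 1` so large that `p ^ N * ξ * (x - c) ∈ ℤ_[p]` for all `x ∈ C`;
write `ξ * (x - c) ≡ b x / p ^ N (mod ℤ_[p])` with `0 ≤ b x < p ^ N`, so that `b c = 0`.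
As `χ` is additive and `χ (a / p ^ N) = ζ ^ a` for `ζ = exp (2πi / p ^ N)`, the hypothesis gives
`∑ x ∈ C, ζ ^ b x = 0`: the cyclotomic polynomial `Φ_{p ^ N}` divides `P = ∑ x ∈ C, X ^ b x`.
Since `(X ^ p ^ M - 1) * Φ_{p ^ N} = X ^ p ^ N - 1` and `deg P < p ^ N`, the coefficients of `P`
below `p ^ N` are `p ^ M`-periodic. The coefficient of `X ^ 0` is nonzero, hence so is that of
`X ^ p ^ M`: some `c' ∈ C` has `ξ * (c' - c) ≡ 1 / p (mod ℤ_[p])`, i.e. `‖ξ * (c' - c)‖ = p`.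
-/

/-- The standard additive character `χ(x) = e^{2πi {x}}` of `ℚ_[p]`, where `{x}` is the
p-adic fractional part of `x`. -/
noncomputable def stdChar (p : ℕ) [hp : Fact p.Prime] (x : ℚ_[p]) : ℂ :=
  let n : ℕ := (-x.valuation).toNat
  let y : ℤ_[p] := ⟨(p : ℚ_[p]) ^ n * x, by
    by_cases hx : x = 0
    · simp [hx]
    · rw [norm_mul, norm_pow, Padic.norm_p, Padic.norm_eq_zpow_neg_valuation hx]
      have h1 : (1:ℝ) < p := by exact_mod_cast hp.out.one_lt
      have h0 : (0:ℝ) < p := by positivity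
      rw [inv_pow, ← zpow_natCast, ← zpow_neg, ← zpow_add₀ (ne_of_gt h0)]
      apply zpow_le_one_of_nonpos₀ h1.le
      have h2 : -x.valuation ≤ ((-x.valuation).toNat : ℤ) := Int.self_le_toNat _
      omega⟩
  Complex.exp (2 * Real.pi * Complex.I * ((y.appr n : ℂ) / (p : ℂ) ^ n))

open Filter Topology Complex Real Polynomial Finset

theorem coeff_add_prime_pow_eq {K : Type*} [Field K] [CharZero K] {p M : ℕ} [Fact p.Prime]
    {ζ : K} (hζ : IsPrimitiveRoot ζ (p ^ (M + 1))) {P : ℚ[X]} (hdeg : P.natDegree < p ^ (M + 1))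
    (hroot : aeval ζ P = 0) {k : ℕ} (hk : k + p ^ M < p ^ (M + 1)) :
    P.coeff (k + p ^ M) = P.coeff k := by
  have hp : p.Prime := Fact.out
  obtain ⟨g, rfl⟩ : cyclotomic (p ^ (M + 1)) ℚ ∣ P := by
    rw [cyclotomic_eq_minpoly_rat hζ (pow_pos hp.pos _)]
    exact minpoly.dvd ℚ ζ hroot
  have hg : ∀ j, p ^ M ≤ j → g.coeff j = 0 := by
    rcases eq_or_ne g 0 with rfl | hg0
    · simp
    intro j hj
    apply coeff_eq_zero_of_natDegree_lt
    rw [natDegree_mul (cyclotomic_ne_zero _ ℚ) hg0, natDegree_cyclotomic,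
      Nat.totient_prime_pow_succ hp] at hdeg
    have : p ^ (M + 1) = p ^ M * (p - 1) + p ^ M := by
      rw [pow_succ, Nat.mul_sub_one, Nat.sub_add_cancel (Nat.le_mul_of_pos_right _ hp.pos)]
    omega
  have key : (X ^ p ^ M - 1) * (cyclotomic (p ^ (M + 1)) ℚ * g) = (X ^ p ^ (M + 1) - 1) * g := by
    rw [← cyclotomic_prime_pow_mul_X_pow_sub_one ℚ p M]
    ring
  have := congrArg (coeff · (k + p ^ M)) key
  simp only [sub_mul, one_mul, coeff_sub, coeff_X_pow_mul', if_neg (not_le.mpr hk),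
    if_pos (Nat.le_add_left _ _), Nat.add_sub_cancel,
    hg _ le_add_self] at this
  linear_combination -this

theorem exists_eq_add_prime_pow_of_sum_pow_eq_zero {K : Type*} [Field K] [CharZero K] {p M : ℕ}
    [Fact p.Prime] {ζ : K} (hζ : IsPrimitiveRoot ζ (p ^ (M + 1))) {α : Type*} {s : Finset α}
    {b : α → ℕ} (hb : ∀ x ∈ s, b x < p ^ (M + 1)) (hsum : ∑ x ∈ s, ζ ^ b x = 0) {k : ℕ}
    (hk : k + p ^ M < p ^ (M + 1)) (hks : ∃ x ∈ s, b x = k) : ∃ x ∈ s, b x = k + p ^ M := by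
  classical
  set P : ℚ[X] := ∑ x ∈ s, X ^ b x
  have hcoeff : ∀ j, P.coeff j ≠ 0 ↔ ∃ x ∈ s, b x = j := by
    intro j
    simp [P, finsetSum_coeff, coeff_X_pow, @eq_comm _ j]
  have hdeg : P.natDegree < p ^ (M + 1) :=
    (natDegree_sum_le_of_forall_le _ _ fun x hx ↦
      (natDegree_X_pow_le _).trans (Nat.le_pred_of_lt (hb x hx))).trans_lt
      (Nat.pred_lt (pow_pos (Fact.out : p.Prime).pos _).ne')
  have hroot : aeval ζ P = 0 := by simpa [P] using hsum
  rw [← hcoeff, coeff_add_prime_pow_eq hζ hdeg hroot hk, hcoeff]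
  exact hks

namespace Padic

variable {p : ℕ} [hp : Fact p.Prime]

theorem eventually_norm_p_pow_mul_le_one (x : ℚ_[p]) :
    ∀ᶠ n in atTop, ‖(p : ℚ_[p]) ^ n * x‖ ≤ 1 := by
  have : Tendsto (fun n : ℕ ↦ ‖(p : ℚ_[p])‖ ^ n * ‖x‖) atTop (𝓝 0) := by
    simpa using (tendsto_pow_atTop_nhds_zero_of_lt_one (norm_nonneg _)
      (norm_p_lt_one (p := p))).mul_const ‖x‖
  filter_upwards [this.eventually (ge_mem_nhds zero_lt_one)] with n hn
  rwa [norm_mul, norm_pow]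

theorem dvd_of_norm_div_p_pow_le_one {a : ℤ} {n : ℕ}
    (h : ‖(a : ℚ_[p]) / (p : ℚ_[p]) ^ n‖ ≤ 1) : (p : ℤ) ^ n ∣ a := by
  rw [norm_div, norm_p_pow, div_le_one (zpow_pos (Nat.cast_pos.mpr hp.out.pos) _)] at h
  exact_mod_cast (norm_int_le_pow_iff_dvd a n).mp h

theorem eq_zero_of_norm_natCast_div_p_pow_le_one {a n : ℕ} (ha : a < p ^ n)
    (h : ‖(a : ℚ_[p]) / (p : ℚ_[p]) ^ n‖ ≤ 1) : a = 0 :=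
  Nat.eq_zero_of_dvd_of_lt (by exact_mod_cast dvd_of_norm_div_p_pow_le_one (a := a) h) ha

theorem norm_eq_of_norm_sub_inv_le_one {x : ℚ_[p]} (h : ‖x - (p : ℚ_[p])⁻¹‖ ≤ 1) : ‖x‖ = p := by
  have hinv : ‖(p : ℚ_[p])⁻¹‖ = p := by rw [norm_inv, norm_p, inv_inv]
  rw [← hinv]
  exact norm_eq_of_norm_sub_lt_right (h.trans_lt (hinv ▸ by exact_mod_cast hp.out.one_lt))

theorem norm_sub_appr_div_le_one {x : ℚ_[p]} {y : ℤ_[p]} {n : ℕ}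
    (hy : (y : ℚ_[p]) = (p : ℚ_[p]) ^ n * x) :
    ‖x - (y.appr n : ℚ_[p]) / (p : ℚ_[p]) ^ n‖ ≤ 1 := by
  have hp0 : (p : ℚ_[p]) ≠ 0 := Nat.cast_ne_zero.mpr hp.out.ne_zero
  have hx : x - (y.appr n : ℚ_[p]) / (p : ℚ_[p]) ^ n =
      ((y - y.appr n : ℤ_[p]) : ℚ_[p]) / (p : ℚ_[p]) ^ n := by
    rw [PadicInt.coe_sub, hy]; field_simp; simp
  rw [hx, norm_div, norm_p_pow, div_le_one (zpow_pos (Nat.cast_pos.mpr hp.out.pos) _),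
    PadicInt.padic_norm_e_of_padicInt]
  exact ((y - y.appr n).norm_le_pow_iff_mem_span_pow n).mpr (y.appr_spec n)

theorem exists_lt_p_pow_norm_sub_div_le_one {x : ℚ_[p]} {n : ℕ}
    (h : ‖(p : ℚ_[p]) ^ n * x‖ ≤ 1) : ∃ a < p ^ n, ‖x - a / (p : ℚ_[p]) ^ n‖ ≤ 1 :=
  ⟨_, PadicInt.appr_lt ⟨_, h⟩ n, norm_sub_appr_div_le_one (y := ⟨_, h⟩) rfl⟩

end Padic

open Padic

section stdChar

variable {p : ℕ} [hp : Fact p.Prime]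

theorem cexp_pow_eq_of_norm_sub_le_one {a b n m : ℕ}
    (h : ‖(a : ℚ_[p]) / (p : ℚ_[p]) ^ n - b / (p : ℚ_[p]) ^ m‖ ≤ 1) :
    cexp (2 * π * I / (p : ℂ) ^ n) ^ a = cexp (2 * π * I / (p : ℂ) ^ m) ^ b := by
  have hp0 : (p : ℚ_[p]) ≠ 0 := Nat.cast_ne_zero.mpr hp.out.ne_zero
  have hpC : (p : ℂ) ≠ 0 := Nat.cast_ne_zero.mpr hp.out.ne_zero
  obtain ⟨k, hk⟩ : (p : ℤ) ^ (n + m) ∣ a * p ^ m - b * p ^ n := by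
    refine dvd_of_norm_div_p_pow_le_one (le_of_eq_of_le ?_ h)
    push_cast
    rw [pow_add]
    field_simp
  have hkC : (a : ℂ) / p ^ n = b / p ^ m + k := by
    have := congrArg (Int.cast : ℤ → ℂ) hk
    push_cast at this
    field_simp
    linear_combination this
  calc cexp (2 * π * I / p ^ n) ^ a = cexp (2 * π * I * (b / p ^ m) + k * (2 * π * I)) := by
        rw [← Complex.exp_nat_mul, mul_div_left_comm, hkC]; ring_nf
    _ = cexp (2 * π * I / p ^ m) ^ b := by
        rw [Complex.exp_add, Complex.exp_int_mul_two_pi_mul_I, mul_one, ← Complex.exp_nat_mul]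
        ring_nf

theorem stdChar_eq_pow {x : ℚ_[p]} {a n : ℕ} (h : ‖x - a / (p : ℚ_[p]) ^ n‖ ≤ 1) :
    stdChar p x = cexp (2 * π * I / (p : ℂ) ^ n) ^ a := by
  -- unfold `stdChar` to its own representative `appr (p ^ m * x) m / p ^ m` of `x`
  obtain ⟨m, y, hχ, hy⟩ : ∃ m, ∃ y : ℤ_[p],
      stdChar p x = cexp (2 * π * I * ((y.appr m : ℂ) / (p : ℂ) ^ m)) ∧
      (y : ℚ_[p]) = (p : ℚ_[p]) ^ m * x := ⟨_, _, rfl, rfl⟩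
  rw [hχ, show 2 * π * I * ((y.appr m : ℂ) / p ^ m) = (y.appr m : ℕ) * (2 * π * I / p ^ m) by ring,
    Complex.exp_nat_mul]
  refine cexp_pow_eq_of_norm_sub_le_one ?_
  calc _ = ‖(x - a / (p : ℚ_[p]) ^ n) + -(x - (y.appr m : ℚ_[p]) / (p : ℚ_[p]) ^ m)‖ := by
        ring_nf
    _ ≤ 1 := (IsUltrametricDist.norm_add_le_max _ _).trans
        (max_le h ((norm_neg _).trans_le (norm_sub_appr_div_le_one hy)))

theorem stdChar_add (x y : ℚ_[p]) : stdChar p (x + y) = stdChar p x * stdChar p y := by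
  obtain ⟨n, hx, hy⟩ :=
    ((eventually_norm_p_pow_mul_le_one x).and (eventually_norm_p_pow_mul_le_one y)).exists
  obtain ⟨a, -, ha⟩ := exists_lt_p_pow_norm_sub_div_le_one hx
  obtain ⟨b, -, hb⟩ := exists_lt_p_pow_norm_sub_div_le_one hy
  have hab : ‖x + y - ((a + b : ℕ) : ℚ_[p]) / (p : ℚ_[p]) ^ n‖ ≤ 1 :=
    calc _ = ‖(x - a / (p : ℚ_[p]) ^ n) + (y - b / (p : ℚ_[p]) ^ n)‖ := by push_cast; ring_nf
      _ ≤ 1 := (IsUltrametricDist.norm_add_le_max _ _).trans (max_le ha hb)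
  rw [stdChar_eq_pow ha, stdChar_eq_pow hb, stdChar_eq_pow hab, pow_add]

theorem stdChar_ne_zero (x : ℚ_[p]) : stdChar p x ≠ 0 :=
  Complex.exp_ne_zero _

end stdChar

/-- If `C ⊂ ℚ_p` is finite, `ξ ≠ 0` and `∑_{c ∈ C} χ(ξ c) = 0`, then for every `c ∈ C`
there exists `c' ∈ C`, `c' ≠ c`, with `|c - c'|_p = p/|ξ|_p`. -/
theorem stmt4 (p : ℕ) [Fact p.Prime] (C : Finset ℚ_[p]) (ξ : ℚ_[p]) (hξ : ξ ≠ 0)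
    (h : ∑ c ∈ C, stdChar p (ξ * c) = 0) :
    ∀ c ∈ C, ∃ c' ∈ C, c' ≠ c ∧ ‖c - c'‖ = p / ‖ξ‖ := by
  have hp : p.Prime := Fact.out
  intro c hc
  obtain ⟨M, hM⟩ := ((Finset.eventually_all C).2 fun x _ ↦ (tendsto_add_atTop_nat 1).eventually
    (eventually_norm_p_pow_mul_le_one (ξ * (x - c)))).exists
  choose! b hb_lt hb using fun x hx ↦ exists_lt_p_pow_norm_sub_div_le_one (hM x hx)
  set ζ := cexp (2 * π * I / (p : ℂ) ^ (M + 1))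
  have hζ : IsPrimitiveRoot ζ (p ^ (M + 1)) := by
    simpa using Complex.isPrimitiveRoot_exp (p ^ (M + 1)) (pow_ne_zero _ hp.ne_zero)
  have hsum : ∑ x ∈ C, ζ ^ b x = 0 := by
    have hχ : ∀ x ∈ C, stdChar p (ξ * x) = stdChar p (ξ * c) * ζ ^ b x := fun x hx ↦ by
      rw [← stdChar_eq_pow (hb x hx), ← stdChar_add, ← mul_add, add_sub_cancel]
    rw [sum_congr rfl hχ, ← mul_sum] at h
    exact (mul_eq_zero.mp h).resolve_left (stdChar_ne_zero _)
  have hbc : b c = 0 := eq_zero_of_norm_natCast_div_p_pow_le_one (hb_lt c hc)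
    (by simpa only [sub_self, mul_zero, zero_sub, norm_neg] using hb c hc)
  obtain ⟨c', hc', hbc'⟩ := exists_eq_add_prime_pow_of_sum_pow_eq_zero hζ hb_lt hsum (k := 0)
    (by rw [zero_add]; exact Nat.pow_lt_pow_right hp.one_lt (lt_add_one M)) ⟨c, hc, hbc⟩
  have hnorm : ‖ξ * (c' - c)‖ = p := norm_eq_of_norm_sub_inv_le_one <| by
    convert hb c' hc' using 3
    rw [hbc', zero_add, Nat.cast_pow, pow_succ,
      div_mul_cancel_left₀ (pow_ne_zero _ (Nat.cast_ne_zero.mpr hp.ne_zero))]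
  refine ⟨c', hc', fun hcc ↦ hp.ne_zero ?_, ?_⟩
  · rw [hcc, sub_self, mul_zero, norm_zero] at hnorm
    exact_mod_cast hnorm.symm
  · rw [eq_div_iff (norm_ne_zero_iff.mpr hξ), ← norm_neg, neg_sub, mul_comm, ← norm_mul, hnorm]
end

section
/- Let p be a prime and Ω ⊂ ℚ_p a Borel set with 0 < m(Ω) < ∞. If (Ω, Λ) is a spectral pair (i.e. the characters {χ_λ : λ ∈ Λ} form an orthogonal basis of L²(Ω)), then Λ is uniformly discrete: there exists n₀ ∈ ℤ such that |λ - λ'|_p > p^{n₀} for all distinct λ, λ' ∈ Λ. -/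
open MeasureTheory

noncomputable instance (p : ℕ) [Fact p.Prime] : MeasurableSpace ℚ_[p] := borel _
instance (p : ℕ) [Fact p.Prime] : BorelSpace ℚ_[p] := ⟨rfl⟩

/-- Haar measure on `ℚ_[p]`, normalized so that `ℤ_p` (the closed unit ball) has measure 1. -/
noncomputable def haarQp (p : ℕ) [Fact p.Prime] : Measure ℚ_[p] :=
  Measure.addHaarMeasure
    ⟨⟨Metric.closedBall 0 1, isCompact_closedBall 0 1⟩,
      ⟨0, by
        rw [mem_interior_iff_mem_nhds]
        exact Metric.closedBall_mem_nhds 0 one_pos⟩⟩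

/-!
Orthogonality of `χ_λ` and `χ_λ'` on `Ω` says `∫_Ω conj χ(λx) χ(λ'x) dx = 0`. Pick a ball `B` of
radius `p^k` carrying more than half of the mass of `Ω`. If `|λ - λ'|_p ≤ p^{-k}`, then
`(λ' - λ)x ∈ ℤ_p` for `x ∈ B`, and `χ` is `ℤ_p`-periodic, so the integrand equals `1` on `Ω ∩ B`;
since it has modulus `1` everywhere, the integral has modulus at least `m(Ω ∩ B) - m(Ω \ B) > 0`.
-/

open Complex Metric Set
open scoped ENNReal ComplexConjugate

section Measure

variable {X : Type*} [MeasurableSpace X]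

lemma integral_conj_mul_eq_zero_of_inner_eq_zero {μ : Measure X} {f g : Lp ℂ 2 μ}
    {φ ψ : X → ℂ} {c : ℝ} (hc : c ≠ 0) (hf : f =ᵐ[μ] fun x => c • φ x)
    (hg : g =ᵐ[μ] fun x => c • ψ x) (hfg : inner ℂ f g = 0) :
    ∫ x, conj (φ x) * ψ x ∂μ = 0 := by
  have hinner : inner ℂ f g = (c : ℂ) ^ 2 * ∫ x, conj (φ x) * ψ x ∂μ := by
    rw [L2.inner_def, ← integral_const_mul]
    refine integral_congr_ae ?_
    filter_upwards [hf, hg] with x hfx hgx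
    simp only [hfx, hgx, RCLike.inner_apply, real_smul, map_mul, conj_ofReal]
    ring
  rw [hinner] at hfg
  exact (mul_eq_zero.1 hfg).resolve_left (pow_ne_zero 2 (ofReal_ne_zero.2 hc))

lemma setIntegral_ne_zero_of_eqOn_one {μ : Measure X} {Ω t : Set X} {f : X → ℂ}
    (hΩ : MeasurableSet Ω) (ht : MeasurableSet t) (hΩfin : μ Ω ≠ ∞)
    (hf : AEStronglyMeasurable f μ) (hf_le : ∀ x, ‖f x‖ ≤ 1)
    (hf_one : EqOn f (fun _ => 1) (Ω ∩ t)) (hlarge : μ (Ω \ t) < μ (Ω ∩ t)) :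
    ∫ x in Ω, f x ∂μ ≠ 0 := by
  have hfin : μ (Ω \ t) < ∞ := (measure_mono sdiff_subset).trans_lt hΩfin.lt_top
  have hint : IntegrableOn f Ω μ := Measure.integrableOn_of_bounded hΩfin hf (.of_forall hf_le)
  have hrest : ‖∫ x in Ω \ t, f x ∂μ‖ ≤ μ.real (Ω \ t) := by
    simpa using norm_setIntegral_le_of_norm_le_const hfin fun x _ => hf_le x
  have hlt : μ.real (Ω \ t) < μ.real (Ω ∩ t) :=
    (ENNReal.toReal_lt_toReal hfin.ne (measure_ne_top_of_subset inter_subset_left hΩfin)).2 hlarge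
  have hsplit := integral_inter_add_sdiff ht hint
  rw [setIntegral_congr_fun (hΩ.inter ht) hf_one, setIntegral_const, real_smul, mul_one] at hsplit
  intro hzero
  rw [hzero, add_eq_zero_iff_eq_neg] at hsplit
  rw [← norm_neg, ← hsplit, norm_real, Real.norm_of_nonneg measureReal_nonneg] at hrest
  exact hlt.not_ge hrest

lemma exists_measure_diff_closedBall_lt_measure_inter [PseudoMetricSpace X]
    [OpensMeasurableSpace X] {μ : Measure X} {Ω : Set X} (h0 : μ Ω ≠ 0) (hfin : μ Ω ≠ ∞)
    (x₀ : X) : ∃ R : ℝ, μ (Ω \ closedBall x₀ R) < μ (Ω ∩ closedBall x₀ R) := by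
  have hmono : Monotone fun n : ℕ => Ω ∩ closedBall x₀ n := fun m n hmn =>
    inter_subset_inter_right _ (closedBall_subset_closedBall (Nat.cast_le.2 hmn))
  have htend := tendsto_measure_iUnion_atTop (μ := μ) hmono
  rw [← inter_iUnion, iUnion_closedBall_nat, inter_univ] at htend
  obtain ⟨n, hn⟩ := (htend.eventually_const_lt (ENNReal.half_lt_self h0 hfin)).exists
  refine ⟨n, lt_of_add_lt_add_right (a := μ (Ω ∩ closedBall x₀ n)) ?_⟩
  calc μ (Ω \ closedBall x₀ n) + μ (Ω ∩ closedBall x₀ n) = μ Ω / 2 + μ Ω / 2 := by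
        rw [measure_sdiff_add_inter _ measurableSet_closedBall, ENNReal.add_halves]
    _ < _ := ENNReal.add_lt_add hn hn

end Measure

lemma norm_exp_two_pi_I_mul_natCast_div_pow (a q n : ℕ) :
    ‖exp (2 * Real.pi * I * ((a : ℂ) / (q : ℂ) ^ n))‖ = 1 := by
  rw [show 2 * Real.pi * I * ((a : ℂ) / (q : ℂ) ^ n) = ((2 * Real.pi * a / q ^ n : ℝ) : ℂ) * I by
    push_cast; ring]
  exact norm_exp_ofReal_mul_I _

lemma PadicInt.appr_eq_appr_of_norm_sub_le {p : ℕ} [Fact p.Prime] {y z : ℤ_[p]} {n : ℕ}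
    (h : ‖y - z‖ ≤ (p : ℝ) ^ (-n : ℤ)) : y.appr n = z.appr n := by
  have hker : y - z ∈ RingHom.ker (PadicInt.toZModPow n) := by
    rw [PadicInt.ker_toZModPow]
    exact (PadicInt.norm_le_pow_iff_mem_span_pow _ n).1 h
  rw [RingHom.mem_ker, map_sub, sub_eq_zero] at hker
  have := (ZMod.natCast_eq_natCast_iff' _ _ _).1 hker
  rwa [Nat.mod_eq_of_lt (PadicInt.appr_lt _ _), Nat.mod_eq_of_lt (PadicInt.appr_lt _ _)] at this

lemma Padic.valuation_eq_of_norm_eq {p : ℕ} [hp : Fact p.Prime] {a b : ℚ_[p]} (ha : a ≠ 0)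
    (hb : b ≠ 0) (h : ‖a‖ = ‖b‖) : a.valuation = b.valuation := by
  rw [Padic.norm_eq_zpow_neg_valuation ha, Padic.norm_eq_zpow_neg_valuation hb] at h
  exact neg_inj.1 (zpow_right_injective₀ (by exact_mod_cast hp.out.pos)
    (by exact_mod_cast hp.out.one_lt.ne') h)

lemma Padic.norm_pow_toNat_neg_valuation_mul_le_one {p : ℕ} [hp : Fact p.Prime] (x : ℚ_[p]) :
    ‖(p : ℚ_[p]) ^ (-x.valuation).toNat * x‖ ≤ 1 := by
  rcases eq_or_ne x 0 with rfl | hx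
  · simp
  have hp0 : (p : ℚ_[p]) ≠ 0 := Nat.cast_ne_zero.2 hp.out.ne_zero
  rw [Padic.norm_le_one_iff_val_nonneg, Padic.valuation_mul (pow_ne_zero _ hp0) hx,
    Padic.valuation_pow, Padic.valuation_p]
  have := Int.self_le_toNat (-x.valuation)
  omega

section StdChar

variable {p : ℕ} [Fact p.Prime]

lemma stdChar_eq_exp_appr {x : ℚ_[p]} {n : ℕ} (hn : (-x.valuation).toNat = n) (y : ℤ_[p])
    (hy : (y : ℚ_[p]) = p ^ n * x) :
    stdChar p x = exp (2 * Real.pi * I * ((y.appr n : ℂ) / (p : ℂ) ^ n)) := by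
  subst hn
  obtain ⟨y, _⟩ := y
  dsimp only at hy
  subst hy
  rfl

lemma norm_stdChar (x : ℚ_[p]) : ‖stdChar p x‖ = 1 :=
  norm_exp_two_pi_I_mul_natCast_div_pow _ _ _

lemma stdChar_eq_one_of_norm_le_one {x : ℚ_[p]} (h : ‖x‖ ≤ 1) : stdChar p x = 1 := by
  have hn : (-x.valuation).toNat = 0 := by
    rw [Int.toNat_eq_zero, neg_nonpos]
    exact (Padic.norm_le_one_iff_val_nonneg x).1 h
  rw [stdChar_eq_exp_appr hn ⟨x, h⟩ (by simp)]
  simp [PadicInt.appr]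

lemma stdChar_eq_of_norm_sub_le_one {a b : ℚ_[p]} (h : ‖a - b‖ ≤ 1) :
    stdChar p a = stdChar p b := by
  rcases le_or_gt ‖b‖ 1 with hb | hb
  · have ha : ‖a‖ ≤ 1 := by
      simpa using (Padic.nonarchimedean (a - b) b).trans (max_le h hb)
    rw [stdChar_eq_one_of_norm_le_one ha, stdChar_eq_one_of_norm_le_one hb]
  have hab : ‖a‖ = ‖b‖ := Padic.norm_eq_of_norm_sub_lt_right (h.trans_lt hb)
  have hb0 : b ≠ 0 := norm_pos_iff.1 (one_pos.trans hb)
  have ha0 : a ≠ 0 := norm_pos_iff.1 (hab ▸ one_pos.trans hb)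
  set n := (-a.valuation).toNat with hn
  have hnb : (-b.valuation).toNat = n := by rw [hn, Padic.valuation_eq_of_norm_eq ha0 hb0 hab]
  obtain ⟨ya, hya⟩ : ∃ y : ℤ_[p], (y : ℚ_[p]) = p ^ n * a :=
    ⟨⟨_, Padic.norm_pow_toNat_neg_valuation_mul_le_one a⟩, rfl⟩
  obtain ⟨yb, hyb⟩ : ∃ y : ℤ_[p], (y : ℚ_[p]) = p ^ n * b :=
    ⟨⟨_, hnb ▸ Padic.norm_pow_toNat_neg_valuation_mul_le_one b⟩, rfl⟩
  rw [stdChar_eq_exp_appr hn.symm ya hya, stdChar_eq_exp_appr hnb yb hyb,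
    PadicInt.appr_eq_appr_of_norm_sub_le]
  rw [PadicInt.norm_def, PadicInt.coe_sub, hya, hyb, ← mul_sub, norm_mul, norm_pow, Padic.norm_p,
    inv_pow, ← zpow_natCast, ← zpow_neg]
  exact mul_le_of_le_one_right (by positivity) h

@[fun_prop]
lemma continuous_stdChar : Continuous (stdChar p) :=
  IsLocallyConstant.continuous <| (IsLocallyConstant.iff_eventually_eq _).2 fun x => by
    filter_upwards [closedBall_mem_nhds x one_pos] with y hy
    exact stdChar_eq_of_norm_sub_le_one (by simpa [dist_eq_norm] using hy)

lemma conj_stdChar_mul_stdChar_eq_one {a b : ℚ_[p]} (h : ‖a - b‖ ≤ 1) :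
    conj (stdChar p a) * stdChar p b = 1 := by
  rw [stdChar_eq_of_norm_sub_le_one h, conj_mul', norm_stdChar]
  simp

end StdChar

theorem stmt10_general (p : ℕ) [Fact p.Prime] (Ω : Set ℚ_[p]) (hΩ : MeasurableSet Ω)
    (h0 : 0 < haarQp p Ω) (hfin : haarQp p Ω < ⊤) (Λ : Set ℚ_[p])
    (e : Λ → Lp ℂ 2 ((haarQp p).restrict Ω))
    (he : ∀ l : Λ, (e l : ℚ_[p] → ℂ) =ᵐ[(haarQp p).restrict Ω]
      fun x => (((haarQp p Ω).toReal) ^ (-(2:ℝ)⁻¹) : ℝ) • stdChar p ((l : ℚ_[p]) * x))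
    (horth : Orthonormal ℂ e) :
    ∃ n₀ : ℤ, ∀ l ∈ Λ, ∀ l' ∈ Λ, l ≠ l' → (p : ℝ) ^ n₀ < ‖l - l'‖ := by
  have hp : (1 : ℝ) < p := by exact_mod_cast (Fact.out : p.Prime).one_lt
  obtain ⟨R, hR⟩ := exists_measure_diff_closedBall_lt_measure_inter h0.ne' hfin.ne (0 : ℚ_[p])
  obtain ⟨k, hk⟩ := pow_unbounded_of_one_lt R hp
  refine ⟨-k, fun l hl l' hl' hne => lt_of_not_ge fun hle => ?_⟩
  have hc : ((haarQp p Ω).toReal) ^ (-(2:ℝ)⁻¹) ≠ 0 :=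
    (Real.rpow_pos_of_pos (ENNReal.toReal_pos h0.ne' hfin.ne) _).ne'
  have horth_ll' : ∫ x in Ω, conj (stdChar p (l * x)) * stdChar p (l' * x) ∂haarQp p = 0 :=
    integral_conj_mul_eq_zero_of_inner_eq_zero hc (he ⟨l, hl⟩) (he ⟨l', hl'⟩)
      (horth.2 (Subtype.coe_ne_coe.1 hne))
  refine setIntegral_ne_zero_of_eqOn_one hΩ measurableSet_closedBall hfin.ne
    (by fun_prop : Continuous _).aestronglyMeasurable
    (fun x => by simp [norm_stdChar]) (fun x hx => ?_) hR horth_ll'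
  refine conj_stdChar_mul_stdChar_eq_one ?_
  have hx : ‖x‖ ≤ p ^ k := by simpa using (mem_closedBall.1 hx.2).trans hk.le
  calc ‖l * x - l' * x‖ = ‖l - l'‖ * ‖x‖ := by rw [← sub_mul, norm_mul]
    _ ≤ (p : ℝ) ^ (-k : ℤ) * p ^ k := by gcongr
    _ = 1 := by rw [zpow_neg, zpow_natCast, inv_mul_cancel₀ (by positivity)]

/-- If `(Ω, Λ)` is a spectral pair in `ℚ_p` (the normalized characters `χ_λ`, `λ ∈ Λ`,
form an orthonormal basis of `L²(Ω)`), then `Λ` is uniformly discrete. -/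
theorem stmt10 (p : ℕ) [Fact p.Prime] (Ω : Set ℚ_[p]) (hΩ : MeasurableSet Ω)
    (h0 : 0 < haarQp p Ω) (hfin : haarQp p Ω < ⊤) (Λ : Set ℚ_[p])
    (e : Λ → Lp ℂ 2 ((haarQp p).restrict Ω))
    (he : ∀ l : Λ, (e l : ℚ_[p] → ℂ) =ᵐ[(haarQp p).restrict Ω]
      fun x => (((haarQp p Ω).toReal) ^ (-(2:ℝ)⁻¹) : ℝ) • stdChar p ((l : ℚ_[p]) * x))
    (horth : Orthonormal ℂ e)
    (hbasis : ⊤ ≤ (Submodule.span ℂ (Set.range e)).topologicalClosure) :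
    ∃ n₀ : ℤ, ∀ l ∈ Λ, ∀ l' ∈ Λ, l ≠ l' → (p : ℝ) ^ n₀ < ‖l - l'‖ :=
  stmt10_general p Ω hΩ h0 hfin Λ e he horth
end

section
/- Let p be a prime and E ⊂ ℚ_p a uniformly discrete set. If ξ ∈ ℚ_p is a zero of the distribution μ_E^ (the Fourier transform of μ_E = ∑_{λ∈E} δ_λ), then every point ξ' with |ξ'|_p = |ξ|_p is also a zero of μ_E^; that is, the zero set of μ_E^ is a union of spheres centered at 0. -/
open MeasureTheory

/-- `ξ` is a zero of the Bruhat–Schwartz distribution `μ̂_E` (the Fourier transform of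
`μ_E = ∑_{λ∈E} δ_λ`): there is `n₀` such that the pairing of `μ̂_E` against the indicator
of every ball `B(y, p^n)` with `y ∈ B(ξ, p^{n₀})` and `n ≤ n₀` vanishes; by the pairing
formula this means that the character sums `∑_{λ ∈ E ∩ B(0,p^{-n})} χ(yλ)⁻¹` vanish. -/
def IsZeroOfFourierMu (p : ℕ) [Fact p.Prime] (E : Set ℚ_[p]) (ξ : ℚ_[p]) : Prop :=
  ∃ n₀ : ℤ, ∀ y : ℚ_[p], ‖y - ξ‖ ≤ (p : ℝ) ^ n₀ → ∀ n : ℤ, n ≤ n₀ →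
    ∑' l : ↥(E ∩ {x : ℚ_[p] | ‖x‖ ≤ (p : ℝ) ^ (-n)}), (stdChar p (y * l))⁻¹ = 0

/-! Only finitely many points of `E` lie in a ball, so each sum in the definition of a zero is a
finite sum of `p^K`-th roots of unity: `χ(yλ) = ζ^{m_λ}` with `ζ = e^{2πi/p^K}`. For a unit `u`
and a natural number `b ≡ u (mod p^K)`, also `χ(uyλ) = ζ^{b m_λ}`. As `b` is prime to `p`,
`ζ ↦ ζ^b` is a Galois conjugation of `ℚ(ζ)`, so it preserves the relation `∑ ζ^{-m_λ} = 0`. -/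

open Complex Polynomial

theorem IsPrimitiveRoot.sum_pow_mul_eq_zero_of_coprime {K ι : Type*} [Field K] [CharZero K]
    {ζ : K} {n : ℕ} (hζ : IsPrimitiveRoot ζ n) {b : ℕ} (hb : b.Coprime n) (s : Finset ι)
    (g : ι → ℕ) (h : ∑ i ∈ s, ζ ^ g i = 0) : ∑ i ∈ s, ζ ^ (b * g i) = 0 := by
  rcases n.eq_zero_or_pos with rfl | hn
  · simpa [(Nat.coprime_zero_right b).mp hb] using h
  have hroot : aeval ζ (∑ i ∈ s, X ^ g i : ℚ[X]) = 0 := by simpa using h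
  have hmin : minpoly ℚ ζ = minpoly ℚ (ζ ^ b) := by
    rw [← cyclotomic_eq_minpoly_rat hζ hn,
      ← cyclotomic_eq_minpoly_rat (hζ.pow_of_coprime b hb) hn]
  obtain ⟨q, hq⟩ := minpoly.dvd ℚ ζ hroot
  have hroot' : aeval (ζ ^ b) (∑ i ∈ s, X ^ g i : ℚ[X]) = 0 := by
    rw [hq, map_mul, hmin, minpoly.aeval, zero_mul]
  simpa [pow_mul] using hroot'

theorem TotallyBounded.finite_of_forall_le_dist {X : Type*} [PseudoMetricSpace X] {s : Set X}
    (hs : TotallyBounded s) {ε : ℝ} (hε : 0 < ε)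
    (hsep : ∀ x ∈ s, ∀ y ∈ s, x ≠ y → ε ≤ dist x y) : s.Finite := by
  obtain ⟨t, hts, ht, hst⟩ := Metric.finite_approx_of_totallyBounded hs ε hε
  refine ht.subset fun x hx => ?_
  obtain ⟨y, hy, hxy⟩ := Set.mem_iUnion₂.mp (hst hx)
  by_contra hxt
  exact (hsep x hx y (hts hy) (ne_of_mem_of_not_mem hy hxt).symm).not_gt hxy

namespace Padic

variable {p : ℕ} [Fact p.Prime]

theorem norm_div_p_pow (a : ℚ_[p]) (n : ℕ) : ‖a / (p : ℚ_[p]) ^ n‖ = ‖a‖ * (p : ℝ) ^ n := by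
  rw [norm_div, norm_p_pow, zpow_neg, zpow_natCast, div_inv_eq_mul]

theorem norm_sub_appr_div_p_pow_le_one (z : ℤ_[p]) (n : ℕ) :
    ‖(z : ℚ_[p]) / (p : ℚ_[p]) ^ n - (z.appr n : ℚ_[p]) / (p : ℚ_[p]) ^ n‖ ≤ 1 := by
  have h := (PadicInt.norm_le_pow_iff_mem_span_pow _ n).mpr (PadicInt.appr_spec n z)
  rw [PadicInt.norm_def, PadicInt.coe_sub, PadicInt.coe_natCast] at h
  rw [← sub_div, norm_div_p_pow]
  calc ‖(z : ℚ_[p]) - z.appr n‖ * (p : ℝ) ^ n ≤ (p : ℝ) ^ (-n : ℤ) * (p : ℝ) ^ n := by gcongr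
    _ = 1 := by rw [zpow_neg, zpow_natCast, inv_mul_cancel₀ (pow_ne_zero _ (NeZero.ne _))]

theorem exists_norm_sub_natCast_div_p_pow_le_one {x : ℚ_[p]} {n : ℕ}
    (hx : ‖x‖ ≤ (p : ℝ) ^ n) : ∃ m : ℕ, ‖x - m / (p : ℚ_[p]) ^ n‖ ≤ 1 := by
  have hz : ‖(p : ℚ_[p]) ^ n * x‖ ≤ 1 := by
    rw [norm_mul, norm_p_pow, zpow_neg, zpow_natCast]
    exact inv_mul_le_one_of_le₀ hx (by positivity)
  refine ⟨PadicInt.appr ⟨_, hz⟩ n, ?_⟩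
  simpa [mul_div_cancel_left₀ _ (pow_ne_zero n (NeZero.ne _))] using
    norm_sub_appr_div_p_pow_le_one ⟨_, hz⟩ n

theorem exists_coprime_norm_sub_natCast_le {u : ℚ_[p]} (hu : ‖u‖ = 1) (n : ℕ) :
    ∃ b : ℕ, p.Coprime b ∧ ‖u - b‖ ≤ (p : ℝ) ^ (-n : ℤ) := by
  set U : ℤ_[p] := ⟨u, hu.le⟩
  -- one extra digit makes `‖u - b‖ < 1 = ‖u‖`, which forces `‖b‖ = 1`
  have h := (PadicInt.norm_le_pow_iff_mem_span_pow _ (n + 1)).mpr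
    (PadicInt.appr_spec (n + 1) U)
  rw [PadicInt.norm_def, PadicInt.coe_sub, PadicInt.coe_natCast] at h
  have hp : (1 : ℝ) < p := by exact_mod_cast (Fact.out : p.Prime).one_lt
  refine ⟨U.appr (n + 1), ?_, h.trans (zpow_le_zpow_right₀ hp.le (by omega))⟩
  have hlt : ‖u - U.appr (n + 1)‖ < ‖u‖ := hu ▸ h.trans_lt (zpow_lt_one_of_neg₀ hp (by omega))
  rw [← norm_natCast_eq_one_iff, ← norm_eq_of_norm_sub_lt_left hlt, hu]

end Padic

open scoped Real

section StdChar

variable {p : ℕ} [Fact p.Prime]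

theorem exp_two_pi_I_mul_div_p_pow_eq_of_norm_sub_le_one {m m' : ℤ} {N N' : ℕ}
    (h : ‖(m : ℚ_[p]) / (p : ℚ_[p]) ^ N - m' / (p : ℚ_[p]) ^ N'‖ ≤ 1) :
    exp (2 * π * I * (m / (p : ℂ) ^ N)) = exp (2 * π * I * (m' / (p : ℂ) ^ N')) := by
  obtain ⟨k, hk⟩ : (p : ℤ) ^ (N + N') ∣ m * p ^ N' - m' * p ^ N := by
    rw [← Padic.norm_int_le_pow_iff_dvd]
    have hp : (p : ℚ_[p]) ≠ 0 := NeZero.ne _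
    have : ((m * p ^ N' - m' * p ^ N : ℤ) : ℚ_[p]) =
        ((m : ℚ_[p]) / p ^ N - m' / p ^ N') * p ^ (N + N') := by
      push_cast
      field_simp
      ring
    rw [this, norm_mul, Padic.norm_p_pow]
    exact mul_le_of_le_one_left (by positivity) h
  have hk' : (m : ℂ) / p ^ N = m' / p ^ N' + k := by
    have hp : (p : ℂ) ≠ 0 := NeZero.ne _
    have hkC : (m : ℂ) * p ^ N' - m' * p ^ N = p ^ N * p ^ N' * k := by
      rw [← pow_add]
      exact_mod_cast hk
    field_simp
    linear_combination hkC
  rw [hk', mul_add, exp_add, mul_comm _ (k : ℂ), exp_int_mul_two_pi_mul_I, mul_one]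

theorem stdChar_eq_exp_of_norm_sub_le_one {x : ℚ_[p]} {N : ℕ} {m : ℤ}
    (h : ‖x - m / (p : ℚ_[p]) ^ N‖ ≤ 1) :
    stdChar p x = exp (2 * π * I * (m / (p : ℂ) ^ N)) := by
  unfold stdChar
  generalize_proofs hy
  set n := (-x.valuation).toNat
  set y : ℤ_[p] := ⟨p ^ n * x, hy⟩
  have happr := Padic.norm_sub_appr_div_p_pow_le_one y n
  rw [show (y : ℚ_[p]) / p ^ n = x from
    mul_div_cancel_left₀ _ (pow_ne_zero n (NeZero.ne _))] at happr
  have hdiff : ‖((y.appr n : ℕ) : ℤ) / (p : ℚ_[p]) ^ n - m / (p : ℚ_[p]) ^ N‖ ≤ 1 := by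
    rw [Int.cast_natCast, ← sub_add_sub_cancel _ x]
    refine (Padic.nonarchimedean _ _).trans (max_le ?_ h)
    rwa [norm_sub_rev]
  simpa using exp_two_pi_I_mul_div_p_pow_eq_of_norm_sub_le_one hdiff

theorem stdChar_eq_pow_of_norm_sub_le_one {x : ℚ_[p]} {N m : ℕ}
    (h : ‖x - m / (p : ℚ_[p]) ^ N‖ ≤ 1) :
    stdChar p x = exp (2 * π * I / (p ^ N : ℕ)) ^ m := by
  rw [stdChar_eq_exp_of_norm_sub_le_one (m := m) (by simpa using h), ← exp_nat_mul]
  congr 1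
  push_cast
  ring

theorem exists_coprime_forall_stdChar_eq_pow {u : ℚ_[p]} (hu : ‖u‖ = 1) (K : ℕ) :
    ∃ b : ℕ, b.Coprime (p ^ K) ∧ ∀ x : ℚ_[p], ‖x‖ ≤ (p : ℝ) ^ K → ∃ m : ℕ,
      stdChar p x = exp (2 * π * I / (p ^ K : ℕ)) ^ m ∧
      stdChar p (u * x) = exp (2 * π * I / (p ^ K : ℕ)) ^ (b * m) := by
  obtain ⟨b, hbp, hub⟩ := Padic.exists_coprime_norm_sub_natCast_le hu K
  refine ⟨b, (hbp.pow_left K).symm, fun x hx => ?_⟩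
  obtain ⟨m, hm⟩ := Padic.exists_norm_sub_natCast_div_p_pow_le_one hx
  refine ⟨m, stdChar_eq_pow_of_norm_sub_le_one hm, stdChar_eq_pow_of_norm_sub_le_one ?_⟩
  have hsplit : u * x - ((b * m : ℕ) : ℚ_[p]) / p ^ K =
      u * (x - m / p ^ K) + (u - b) * m / p ^ K := by
    push_cast
    ring
  rw [hsplit]
  refine (Padic.nonarchimedean _ _).trans (max_le ?_ ?_)
  · rwa [norm_mul, hu, one_mul]
  · rw [Padic.norm_div_p_pow, norm_mul]
    calc ‖u - b‖ * ‖(m : ℚ_[p])‖ * p ^ K ≤ p ^ (-K : ℤ) * 1 * p ^ K := by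
          gcongr
          exact_mod_cast Padic.norm_int_le_one (p := p) m
      _ = 1 := by
          rw [mul_one, zpow_neg, zpow_natCast, inv_mul_cancel₀ (pow_ne_zero _ (NeZero.ne _))]

theorem sum_inv_stdChar_mul_eq_zero_of_norm_eq_one {ι : Type*} {u : ℚ_[p]} (hu : ‖u‖ = 1)
    (s : Finset ι) (f : ι → ℚ_[p]) (h : ∑ i ∈ s, (stdChar p (f i))⁻¹ = 0) :
    ∑ i ∈ s, (stdChar p (u * f i))⁻¹ = 0 := by
  obtain ⟨K, hK⟩ : ∃ K : ℕ, ∀ i ∈ s, ‖f i‖ ≤ (p : ℝ) ^ K := by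
    obtain ⟨K, hK⟩ := pow_unbounded_of_one_lt (∑ i ∈ s, ‖f i‖)
      (by exact_mod_cast (Fact.out : p.Prime).one_lt : (1 : ℝ) < p)
    exact ⟨K, fun i hi => (Finset.single_le_sum (fun j _ => norm_nonneg (f j)) hi).trans hK.le⟩
  obtain ⟨b, hb, hχ⟩ := exists_coprime_forall_stdChar_eq_pow hu K
  choose! m hm hum using fun i (hi : i ∈ s) => hχ (f i) (hK i hi)
  have hζ := (isPrimitiveRoot_exp (p ^ K) (NeZero.ne _)).inv
  have hconj := hζ.sum_pow_mul_eq_zero_of_coprime hb s m <| by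
    rw [← h]
    exact Finset.sum_congr rfl fun i hi => by rw [hm i hi, inv_pow]
  rw [← hconj]
  exact Finset.sum_congr rfl fun i hi => by rw [hum i hi, inv_pow]

theorem IsZeroOfFourierMu.mul_of_norm_eq_one {E : Set ℚ_[p]}
    (hE : ∀ r : ℝ, (E ∩ {x : ℚ_[p] | ‖x‖ ≤ r}).Finite) {ξ u : ℚ_[p]}
    (hξ : IsZeroOfFourierMu p E ξ) (hu : ‖u‖ = 1) : IsZeroOfFourierMu p E (u * ξ) := by
  obtain ⟨n₀, h⟩ := hξ
  have hu0 : u ≠ 0 := norm_ne_zero_iff.mp (hu ▸ one_ne_zero)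
  refine ⟨n₀, fun y hy n hn => ?_⟩
  have hy' : ‖u⁻¹ * y - ξ‖ ≤ (p : ℝ) ^ n₀ := by
    rwa [show u⁻¹ * y - ξ = u⁻¹ * (y - u * ξ) by field_simp, norm_mul, norm_inv, hu, inv_one,
      one_mul]
  have := (hE (p ^ (-n))).fintype
  have hsum := h _ hy' n hn
  rw [tsum_fintype] at hsum ⊢
  simpa [← mul_assoc, mul_inv_cancel₀ hu0] using
    sum_inv_stdChar_mul_eq_zero_of_norm_eq_one hu Finset.univ _ hsum

end StdChar

/-- If `ξ` is a zero of `μ̂_E` for a uniformly discrete `E ⊂ ℚ_p`, then so is every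
`ξ'` with `|ξ'|_p = |ξ|_p`: the zero set of `μ̂_E` is a union of spheres centered at 0. -/
theorem stmt14 (p : ℕ) [Fact p.Prime] (E : Set ℚ_[p])
    (hE : ∃ ε > (0:ℝ), ∀ x ∈ E, ∀ y ∈ E, x ≠ y → ε ≤ ‖x - y‖)
    (ξ : ℚ_[p]) (hξ : IsZeroOfFourierMu p E ξ) :
    ∀ ξ' : ℚ_[p], ‖ξ'‖ = ‖ξ‖ → IsZeroOfFourierMu p E ξ' := by
  intro ξ' hnorm
  obtain ⟨ε, hε, hsep⟩ := hE
  have hfin (r : ℝ) : (E ∩ {x : ℚ_[p] | ‖x‖ ≤ r}).Finite :=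
    ((isCompact_closedBall (0 : ℚ_[p]) r).totallyBounded.subset
      fun x hx => mem_closedBall_zero_iff.mpr hx.2).finite_of_forall_le_dist hε
      fun x hx y hy hxy => by simpa [dist_eq_norm] using hsep x hx.1 y hy.1 hxy
  rcases eq_or_ne ξ 0 with rfl | hξ0
  · rwa [norm_eq_zero.mp (hnorm.trans norm_zero)]
  have hu : ‖ξ' / ξ‖ = 1 := by rw [norm_div, hnorm, div_self (norm_ne_zero_iff.mpr hξ0)]
  simpa [div_mul_cancel₀ _ hξ0] using hξ.mul_of_norm_eq_one hfin hu
end
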